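/- Let A ∈ ℝ^{m×n} and let A = UΣVᵀ be a singular value decomposition: U ∈ ℝ^{m×m} and V ∈ ℝ^{n×n} are orthogonal and Σ ∈ ℝ^{m×n} satisfies Σ(i,i) = σ_i(A) for 1 ≤ i ≤ min(m,n) and Σ(i,j) = 0 for i ≠ j. Fix integers μ and ℓ with 1 ≤ μ < n and μ ≤ ℓ. Let Ω ∈ ℝ^{n×ℓ}, and write VᵀΩ = [H; R₂] where H ∈ ℝ^{μ×ℓ} consists of the first μ rows and R₂ ∈ ℝ^{(n−μ)×ℓ} of the remaining rows. Suppose G ∈ ℝ^{ℓ×μ} satisfies HG = I_μ, and define F = [G | 0_{ℓ×(n−μ)}] · Vᵀ ∈ ℝ^{ℓ×n}. Then ‖F‖₂ = ‖G‖₂ and ‖AΩF − A‖_F ≤ (1 + ‖R₂‖₂‖G‖₂) · Δ_{μ+1}(A). -/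

import Mathlib

open Matrix
open scoped BigOperators

noncomputable section

/-- Frobenius norm of a real matrix. -/
def frobNorm {m n : ℕ} (A : Matrix (Fin m) (Fin n) ℝ) : ℝ :=
  Real.sqrt (∑ i, ∑ j, A i j ^ 2)

/-- Nonincreasing rearrangement of a finite tuple of reals. -/
def sortedDesc {n : ℕ} (f : Fin n → ℝ) : Fin n → ℝ :=
  fun k => - ((fun i => - f i) ∘ Tuple.sort (fun i => - f i)) k

/-- `sval A k` is the `(k+1)`-st largest singular value of `A` (i.e. 0-based index `k`),
the square root of the `(k+1)`-st largest eigenvalue of `AᵀA`; it is `0` for `k ≥ n`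
(in particular for `k ≥ min m n`). -/
def sval {m n : ℕ} (A : Matrix (Fin m) (Fin n) ℝ) (k : ℕ) : ℝ :=
  if h : k < n then
    Real.sqrt (sortedDesc (Matrix.isHermitian_conjTranspose_mul_self A).eigenvalues ⟨k, h⟩)
  else 0

/-- Spectral norm (ℓ²→ℓ² operator norm) of a real matrix: its largest singular value. -/
def specNorm {m n : ℕ} (A : Matrix (Fin m) (Fin n) ℝ) : ℝ := sval A 0

/-- `tailDelta A μ = Δ_{μ+1}(A) = sqrt (Σ_{k=μ+1}^{min(m,n)} σ_k(A)²)` (with 1-based σ's,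
so 0-based indices `μ, …, min m n - 1`). -/
def tailDelta {m n : ℕ} (A : Matrix (Fin m) (Fin n) ℝ) (μ : ℕ) : ℝ :=
  Real.sqrt (∑ k ∈ Finset.Ico μ (min m n), sval A k ^ 2)

end

/-!
Write `K = Vᵀ Ω` and let `J₁`, `J₂` be the coordinate inclusions of `ℝ^μ` and `ℝ^(n-μ)` into
`ℝⁿ` (first and last coordinates). Then `H = J₁ᵀ K`, `R₂ = J₂ᵀ K`, `F = G (V J₁)ᵀ` and
`J₁ J₁ᵀ + J₂ J₂ᵀ = 1`. As `V J₁` has orthonormal columns, `‖F‖₂ = ‖G‖₂`. Inserting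
`1 = J₁ J₁ᵀ + J₂ J₂ᵀ` and using `H G = 1` gives `A Ω F - A = U (Σ J₂) (R₂ G J₁ᵀ - J₂ᵀ) Vᵀ`,
where `‖Σ J₂‖_F = Δ_{μ+1}(A)`; the bound follows from `‖M Y‖_F ≤ ‖M‖_F ‖Y‖₂` and
`‖R₂ G J₁ᵀ - J₂ᵀ‖₂ ≤ ‖R₂‖₂ ‖G‖₂ + 1`.

The spectral norm, defined through the eigenvalues of `AᵀA`, agrees with the L2 operator norm
because `‖A‖₂² = ‖AᵀA‖₂` and the spectral theorem makes `AᵀA` unitarily equivalent to the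
diagonal matrix of its eigenvalues.
-/

open scoped Matrix.Norms.L2Operator

theorem isGreatest_sortedDesc_zero {n : ℕ} (hn : 0 < n) (f : Fin n → ℝ) :
    IsGreatest (Set.range f) (sortedDesc f ⟨0, hn⟩) := by
  refine ⟨⟨Tuple.sort (fun i => -f i) ⟨0, hn⟩, by simp [sortedDesc]⟩, ?_⟩
  rintro _ ⟨i, rfl⟩
  have := Tuple.monotone_sort (fun i => -f i)
    (show (⟨0, hn⟩ : Fin n) ≤ (Tuple.sort fun i => -f i).symm i from Nat.zero_le _)
  simp only [Function.comp_apply, Equiv.apply_symm_apply] at this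
  simp only [sortedDesc, Function.comp_apply]
  linarith

theorem sortedDesc_zero_eq_norm {n : ℕ} (hn : 0 < n) {f : Fin n → ℝ} (hf : 0 ≤ f) :
    sortedDesc f ⟨0, hn⟩ = ‖f‖ := by
  obtain ⟨⟨i, hi⟩, hmax⟩ := isGreatest_sortedDesc_zero hn f
  refine le_antisymm (hi ▸ (le_abs_self _).trans (norm_le_pi_norm f i)) ?_
  refine (pi_norm_le_iff_of_nonneg (hi ▸ hf i)).2 fun j => ?_
  rw [Real.norm_of_nonneg (hf j)]
  exact hmax ⟨j, rfl⟩

namespace Matrix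

section L2OpNorm

variable {𝕜 : Type*} [RCLike 𝕜] {l m n : Type*} [Fintype l] [Fintype m] [Fintype n]

theorem IsHermitian.l2_opNorm_eq_norm_eigenvalues [DecidableEq n] {A : Matrix n n 𝕜}
    (hA : A.IsHermitian) : ‖A‖ = ‖hA.eigenvalues‖ := by
  conv_lhs => rw [hA.spectral_theorem, Unitary.conjStarAlgAut_apply, mul_assoc,
    CStarRing.norm_coe_unitary_mul, CStarRing.norm_mul_mem_unitary _
      (Unitary.star_mem hA.eigenvectorUnitary.2), l2_opNorm_diagonal]
  simp [Pi.norm_def]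

theorem l2_opNorm_le_one_of_conjTranspose_mul_self_eq_one [DecidableEq n] {W : Matrix m n 𝕜}
    (hW : Wᴴ * W = 1) : ‖W‖ ≤ 1 := by
  have h : ‖W‖ * ‖W‖ ≤ 1 := by
    rw [← l2_opNorm_conjTranspose_mul_self, hW, ← diagonal_one, l2_opNorm_diagonal]
    exact (pi_norm_const_le (1 : 𝕜)).trans norm_one.le
  nlinarith [norm_nonneg W]

theorem l2_opNorm_mul_conjTranspose_of_conjTranspose_mul_self_eq_one [DecidableEq m]
    [DecidableEq n] (X : Matrix l n 𝕜) {W : Matrix m n 𝕜} (hW : Wᴴ * W = 1) :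
    ‖X * Wᴴ‖ = ‖X‖ := by
  have hW1 := l2_opNorm_le_one_of_conjTranspose_mul_self_eq_one hW
  refine le_antisymm ?_ ?_
  · calc ‖X * Wᴴ‖ ≤ ‖X‖ * ‖Wᴴ‖ := l2_opNorm_mul _ _
      _ ≤ ‖X‖ := by
        rw [l2_opNorm_conjTranspose]; exact mul_le_of_le_one_right (norm_nonneg X) hW1
  · calc ‖X‖ = ‖X * Wᴴ * W‖ := by rw [Matrix.mul_assoc, hW, Matrix.mul_one]
      _ ≤ ‖X * Wᴴ‖ * ‖W‖ := l2_opNorm_mul _ _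
      _ ≤ ‖X * Wᴴ‖ := mul_le_of_le_one_right (norm_nonneg _) hW1

theorem l2_opNorm_transpose_le_one_of_transpose_mul_self_eq_one [DecidableEq m] [DecidableEq n]
    {W : Matrix m n ℝ} (hW : Wᵀ * W = 1) : ‖Wᵀ‖ ≤ 1 := by
  rw [← conjTranspose_eq_transpose_of_trivial, l2_opNorm_conjTranspose]
  exact l2_opNorm_le_one_of_conjTranspose_mul_self_eq_one hW

theorem l2_opNorm_mul_transpose_sub_transpose_le {l₁ l₂ : Type*} [Fintype l₁] [Fintype l₂]
    [DecidableEq l₁] [DecidableEq l₂] [DecidableEq n] {J₁ : Matrix n l₁ ℝ} {J₂ : Matrix n l₂ ℝ}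
    (h₁ : J₁ᵀ * J₁ = 1) (h₂ : J₂ᵀ * J₂ = 1) (C : Matrix l₂ l₁ ℝ) :
    ‖C * J₁ᵀ - J₂ᵀ‖ ≤ ‖C‖ + 1 :=
  calc ‖C * J₁ᵀ - J₂ᵀ‖ ≤ ‖C‖ * ‖J₁ᵀ‖ + ‖J₂ᵀ‖ :=
        (norm_sub_le _ _).trans (by gcongr; exact l2_opNorm_mul _ _)
    _ ≤ ‖C‖ * 1 + 1 := by
        gcongr
        exacts [l2_opNorm_transpose_le_one_of_transpose_mul_self_eq_one h₁,
          l2_opNorm_transpose_le_one_of_transpose_mul_self_eq_one h₂]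
    _ = ‖C‖ + 1 := by rw [mul_one]

end L2OpNorm

abbrev colSelect (R : Type*) [Zero R] [One R] {l n : Type*} [DecidableEq n] (e : l → n) :
    Matrix n l R :=
  (1 : Matrix n n R).submatrix id e

section ColSelect

variable {R : Type*} {k l l₁ l₂ m n : Type*} [Fintype n] [DecidableEq n]

theorem transpose_colSelect_mul [NonAssocSemiring R] (e : l → n) (X : Matrix n k R) :
    (colSelect R e)ᵀ * X = X.submatrix e id := by
  ext i j
  simp [mul_apply, one_apply]

theorem mul_colSelect [NonAssocSemiring R] (X : Matrix m n R) (e : l → n) :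
    X * colSelect R e = X.submatrix id e := by
  ext i j
  simp [mul_apply, one_apply]

theorem transpose_colSelect_mul_colSelect [NonAssocSemiring R] [DecidableEq l] {e : l → n}
    (he : Function.Injective e) : (colSelect R e)ᵀ * colSelect R e = 1 := by
  rw [transpose_colSelect_mul, submatrix_submatrix, Function.id_comp, Function.comp_id,
    submatrix_one e he]

theorem colSelect_mul_transpose_add [Semiring R] [Fintype l₁] [Fintype l₂]
    (σ : l₁ ⊕ l₂ ≃ n) :
    colSelect R (σ ∘ Sum.inl) * (colSelect R (σ ∘ Sum.inl))ᵀ +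
      colSelect R (σ ∘ Sum.inr) * (colSelect R (σ ∘ Sum.inr))ᵀ = 1 := by
  have h : fromCols (colSelect R (σ ∘ Sum.inl)) (colSelect R (σ ∘ Sum.inr)) = colSelect R σ := by
    ext i (j | j) <;> rfl
  rw [← fromCols_mul_fromRows, ← transpose_fromCols, h, transpose_submatrix, transpose_one,
    mul_submatrix_one σ id]
  simp

theorem mul_transpose_colSelect_castLE [NonAssocSemiring R] {μ n : ℕ} (h : μ ≤ n)
    (G : Matrix l (Fin μ) R) :
    G * (colSelect R (Fin.castLE h))ᵀ =
      of fun i (j : Fin n) => if hj : (j : ℕ) < μ then G i ⟨j, hj⟩ else 0 := by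
  ext i j
  simp only [mul_apply, transpose_apply, submatrix_apply, id, one_apply, mul_ite, mul_one,
    mul_zero, of_apply]
  split_ifs with hj
  · rw [Finset.sum_eq_single ⟨j, hj⟩] <;> simp_all [Fin.ext_iff, eq_comm]
  · exact Finset.sum_eq_zero fun k _ => if_neg fun hk : j = Fin.castLE h k => hj (hk ▸ k.isLt)

end ColSelect

theorem mul_sub_one_eq_mul_sub_transpose {R : Type*} [CommRing R] {k l₁ l₂ n : Type*}
    [Fintype k] [Fintype l₁] [Fintype l₂] [Fintype n] [DecidableEq l₁] [DecidableEq n]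
    {J₁ : Matrix n l₁ R} {J₂ : Matrix n l₂ R} (hJ : J₁ * J₁ᵀ + J₂ * J₂ᵀ = 1)
    {K : Matrix n k R} {G : Matrix k l₁ R} (hG : J₁ᵀ * K * G = 1) :
    K * G * J₁ᵀ - 1 = J₂ * (J₂ᵀ * K * G * J₁ᵀ - J₂ᵀ) := by
  calc K * G * J₁ᵀ - 1 = (J₁ * J₁ᵀ + J₂ * J₂ᵀ) * K * G * J₁ᵀ - (J₁ * J₁ᵀ + J₂ * J₂ᵀ) := by
        rw [hJ, Matrix.one_mul]
    _ = J₁ * (J₁ᵀ * K * G) * J₁ᵀ + J₂ * (J₂ᵀ * K * G * J₁ᵀ) - (J₁ * J₁ᵀ + J₂ * J₂ᵀ) := by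
        simp only [Matrix.add_mul, Matrix.mul_assoc]
    _ = J₂ * (J₂ᵀ * K * G * J₁ᵀ - J₂ᵀ) := by
        rw [hG, Matrix.mul_one, Matrix.mul_sub]; abel

end Matrix

theorem specNorm_eq_l2_opNorm {m n : ℕ} (A : Matrix (Fin m) (Fin n) ℝ) : specNorm A = ‖A‖ := by
  rcases Nat.eq_zero_or_pos n with rfl | hn
  · simp [specNorm, sval, Subsingleton.elim A 0]
  have hAA := isHermitian_conjTranspose_mul_self A
  have hspec : 0 ≤ hAA.eigenvalues := (posSemidef_conjTranspose_mul_self A).eigenvalues_nonneg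
  rw [specNorm, sval, dif_pos hn, sortedDesc_zero_eq_norm hn hspec,
    ← hAA.l2_opNorm_eq_norm_eigenvalues, l2_opNorm_conjTranspose_mul_self,
    Real.sqrt_mul_self (norm_nonneg _)]

theorem frobNorm_mul_le {k m n : ℕ} (X : Matrix (Fin k) (Fin m) ℝ) (Y : Matrix (Fin m) (Fin n) ℝ) :
    frobNorm (X * Y) ≤ frobNorm X * ‖Y‖ := by
  have hrow (i : Fin k) : ∑ j, (X * Y) i j ^ 2 ≤ ‖Y‖ ^ 2 * ∑ j, X i j ^ 2 := by
    have h := l2_opNorm_mulVec Yᵀ (WithLp.toLp 2 (X i))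
    rw [← conjTranspose_eq_transpose_of_trivial, l2_opNorm_conjTranspose] at h
    have h2 := pow_le_pow_left₀ (norm_nonneg _) h 2
    rw [mul_pow, EuclideanSpace.real_norm_sq_eq, EuclideanSpace.real_norm_sq_eq] at h2
    simpa [mul_apply, mulVec, dotProduct, mul_comm] using h2
  calc frobNorm (X * Y) ≤ √(‖Y‖ ^ 2 * ∑ i, ∑ j, X i j ^ 2) := by
        rw [Finset.mul_sum]; exact Real.sqrt_le_sqrt (Finset.sum_le_sum fun i _ => hrow i)
    _ = frobNorm X * ‖Y‖ := by
        rw [frobNorm, Real.sqrt_mul (sq_nonneg _), Real.sqrt_sq (norm_nonneg _), mul_comm]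

theorem frobNorm_eq_sqrt_trace {m n : ℕ} (X : Matrix (Fin m) (Fin n) ℝ) :
    frobNorm X = √(X * Xᵀ).trace := by
  simp [frobNorm, trace, mul_apply, sq]

theorem frobNorm_mul_mul_transpose_of_orthogonal {m n : ℕ} {U : Matrix (Fin m) (Fin m) ℝ}
    {V : Matrix (Fin n) (Fin n) ℝ} (hU : Uᵀ * U = 1) (hV : Vᵀ * V = 1)
    (E : Matrix (Fin m) (Fin n) ℝ) : frobNorm (U * E * Vᵀ) = frobNorm E := by
  have h : U * E * Vᵀ * (U * E * Vᵀ)ᵀ = U * (E * Eᵀ) * Uᵀ := by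
    simp only [transpose_mul, transpose_transpose, Matrix.mul_assoc]
    rw [← Matrix.mul_assoc Vᵀ V, hV, Matrix.one_mul]
  rw [frobNorm_eq_sqrt_trace, frobNorm_eq_sqrt_trace, h, trace_mul_comm, ← Matrix.mul_assoc, hU,
    Matrix.one_mul]

open Finset in
theorem frobNorm_submatrix_tail_of_rectDiagonal {m n μ : ℕ} {S : Matrix (Fin m) (Fin n) ℝ}
    {d : ℕ → ℝ} (hS : ∀ i j, S i j = if (i : ℕ) = (j : ℕ) then d i else 0) :
    frobNorm (S.submatrix id fun k : Fin (n - μ) => ⟨μ + k, by have := k.isLt; omega⟩) =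
      √(∑ k ∈ Ico μ (min m n), d k ^ 2) := by
  rw [frobNorm, Finset.sum_comm]
  congr 1
  simp only [submatrix_apply, id, hS, ite_pow, ne_eq, OfNat.ofNat_ne_zero, not_false_eq_true,
    zero_pow]
  calc ∑ k : Fin (n - μ), ∑ i : Fin m, (if (i : ℕ) = μ + k then d i ^ 2 else 0)
      = ∑ k : Fin (n - μ), if μ + k < m then d (μ + k) ^ 2 else 0 := by
        refine sum_congr rfl fun k _ => ?_
        rw [Fin.sum_univ_eq_sum_range (fun i => if i = μ + k then d i ^ 2 else 0), sum_ite_eq']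
        simp
    _ = ∑ j ∈ Ico μ n, if j < m then d j ^ 2 else 0 := by
        rw [Fin.sum_univ_eq_sum_range (fun k => if μ + k < m then d (μ + k) ^ 2 else 0),
          sum_Ico_eq_sum_range]
    _ = ∑ k ∈ Ico μ (min m n), d k ^ 2 := by
        rw [← sum_filter]
        congr 1
        ext j
        simp only [mem_filter, mem_Ico, lt_min_iff]
        omega

/-- Given an SVD `A = UΣVᵀ`, with `VᵀΩ = [H; R₂]`, a right inverse `G` of `H`
(`HG = I_μ`) and `F = [G | 0]·Vᵀ`, one has `‖F‖₂ = ‖G‖₂` and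
`‖AΩF − A‖_F ≤ (1 + ‖R₂‖₂‖G‖₂)·Δ_{μ+1}(A)`. -/
theorem svd_sketch_bound {m n μ ℓ : ℕ} (hμn : μ < n)
    (A : Matrix (Fin m) (Fin n) ℝ)
    (U : Matrix (Fin m) (Fin m) ℝ) (V : Matrix (Fin n) (Fin n) ℝ)
    (S : Matrix (Fin m) (Fin n) ℝ)
    (hU : Uᵀ * U = 1) (hV : Vᵀ * V = 1)
    (hS : ∀ (i : Fin m) (j : Fin n), S i j = if (i : ℕ) = (j : ℕ) then sval A (i : ℕ) else 0)
    (hA : A = U * S * Vᵀ)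
    (Ω : Matrix (Fin n) (Fin ℓ) ℝ)
    (H : Matrix (Fin μ) (Fin ℓ) ℝ)
    (R₂ : Matrix (Fin (n - μ)) (Fin ℓ) ℝ)
    (hH : ∀ (i : Fin μ) (j : Fin ℓ), H i j = (Vᵀ * Ω) (Fin.castLE hμn.le i) j)
    (hR₂ : ∀ (i : Fin (n - μ)) (j : Fin ℓ),
      R₂ i j = (Vᵀ * Ω) ⟨μ + (i : ℕ), by have := i.isLt; omega⟩ j)
    (G : Matrix (Fin ℓ) (Fin μ) ℝ) (hG : H * G = 1)
    (F : Matrix (Fin ℓ) (Fin n) ℝ)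
    (hF : F = (Matrix.of fun (i : Fin ℓ) (j : Fin n) =>
      if h : (j : ℕ) < μ then G i ⟨(j : ℕ), h⟩ else 0) * Vᵀ) :
    specNorm F = specNorm G ∧
      frobNorm (A * Ω * F - A) ≤ (1 + specNorm R₂ * specNorm G) * tailDelta A μ := by
  set J₁ := colSelect ℝ (Fin.castLE hμn.le)
  set J₂ := colSelect ℝ fun k : Fin (n - μ) => (⟨μ + k, by have := k.isLt; omega⟩ : Fin n)
  have hJ : J₁ * J₁ᵀ + J₂ * J₂ᵀ = 1 :=
    colSelect_mul_transpose_add (finSumFinEquiv.trans (finCongr (Nat.add_sub_cancel' hμn.le)))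
  have hJ₁ : J₁ᵀ * J₁ = 1 := transpose_colSelect_mul_colSelect (Fin.castLE_injective _)
  have hJ₂ : J₂ᵀ * J₂ = 1 :=
    transpose_colSelect_mul_colSelect fun i j h => by simpa [Fin.ext_iff] using h
  have hH' : H = J₁ᵀ * (Vᵀ * Ω) := by
    ext i j; rw [hH, transpose_colSelect_mul]; rfl
  have hR₂' : R₂ = J₂ᵀ * (Vᵀ * Ω) := by
    ext i j; rw [hR₂, transpose_colSelect_mul]; rfl
  have hF' : F = G * (V * J₁)ᵀ := by
    rw [hF, transpose_mul, ← Matrix.mul_assoc, mul_transpose_colSelect_castLE]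
  have hVJ₁ : (V * J₁)ᵀ * (V * J₁) = 1 := by
    rw [transpose_mul, Matrix.mul_assoc, ← Matrix.mul_assoc Vᵀ, hV, Matrix.one_mul, hJ₁]
  have hresidual : A * Ω * F - A = U * (S * J₂ * (R₂ * G * J₁ᵀ - J₂ᵀ)) * Vᵀ := by
    rw [hR₂', Matrix.mul_assoc S, ← mul_sub_one_eq_mul_sub_transpose hJ (hH' ▸ hG), hA, hF']
    simp only [Matrix.mul_sub, Matrix.sub_mul, Matrix.mul_assoc, transpose_mul, Matrix.mul_one]
  have htail : frobNorm (S * J₂) = tailDelta A μ := by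
    rw [mul_colSelect, frobNorm_submatrix_tail_of_rectDiagonal hS, tailDelta]
  rw [specNorm_eq_l2_opNorm, specNorm_eq_l2_opNorm, specNorm_eq_l2_opNorm, hresidual,
    frobNorm_mul_mul_transpose_of_orthogonal hU hV, hF']
  refine ⟨l2_opNorm_mul_conjTranspose_of_conjTranspose_mul_self_eq_one G hVJ₁, ?_⟩
  have htail_nonneg : 0 ≤ tailDelta A μ := Real.sqrt_nonneg _
  calc frobNorm (S * J₂ * (R₂ * G * J₁ᵀ - J₂ᵀ))
      ≤ tailDelta A μ * ‖R₂ * G * J₁ᵀ - J₂ᵀ‖ := htail ▸ frobNorm_mul_le _ _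
    _ ≤ tailDelta A μ * (‖R₂‖ * ‖G‖ + 1) := by
        gcongr
        exact (l2_opNorm_mul_transpose_sub_transpose_le hJ₁ hJ₂ _).trans
          (by gcongr; exact l2_opNorm_mul _ _)
    _ = (1 + ‖R₂‖ * ‖G‖) * tailDelta A μ := by ring
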